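/- For a 4×4 real matrix M indexed by Fin 2 × Fin 2, define its partial transpose on the first factor by (M^{T_A})_{(i,j),(i',j')} := M_{(i',j),(i,j')}. Then for every real symmetric 4×4 matrix ρ: (1/2)·(ρ + ρ^{T_A}) = ρ − (1/4)·trace(ρ * Y₄) • Y₄; that is, averaging a two-rebit state with its partial transpose on one subsystem implements exactly the tomographically local projection Π_TL, removing the σ_y ⊗ σ_y component. -/

import Mathlib

open Matrix Kronecker

/-!
The difference `D = ρ - ρ^{T_A}` is symmetric (because `ρ` is) and changes sign under the
partial transpose; on two rebits this forces `D` to be a multiple of `Y₄ = σ_y ⊗ σ_y`.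
Pairing with `Y₄` reads off the coefficient, as `Y₄ * Y₄ = 1`; and since the partial transpose
is self-adjoint for the trace pairing with `Y₄^{T_A} = -Y₄`, `tr (D * Y₄) = 2 tr (ρ * Y₄)`.
-/

noncomputable def y : Matrix (Fin 2) (Fin 2) ℝ := !![0, -1; 1, 0]

/-- The real 4×4 matrix representing σ_y ⊗ σ_y. -/
noncomputable def Y₄ : Matrix (Fin 2 × Fin 2) (Fin 2 × Fin 2) ℝ := -(y ⊗ₖ y)

/-- Partial transpose `M^{T_A}` on the first tensor factor. -/
noncomputable def ptA (M : Matrix (Fin 2 × Fin 2) (Fin 2 × Fin 2) ℝ) :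
    Matrix (Fin 2 × Fin 2) (Fin 2 × Fin 2) ℝ :=
  Matrix.of fun p q => M (q.1, p.2) (p.1, q.2)

namespace Matrix

variable {m n α : Type*}

def partialTransposeFst (M : Matrix (m × n) (m × n) α) : Matrix (m × n) (m × n) α :=
  of fun p q => M (q.1, p.2) (p.1, q.2)

@[simp]
theorem partialTransposeFst_apply (M : Matrix (m × n) (m × n) α) (p q : m × n) :
    M.partialTransposeFst p q = M (q.1, p.2) (p.1, q.2) :=
  rfl

@[simp]
theorem partialTransposeFst_partialTransposeFst (M : Matrix (m × n) (m × n) α) :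
    M.partialTransposeFst.partialTransposeFst = M :=
  rfl

theorem partialTransposeFst_transpose (M : Matrix (m × n) (m × n) α) :
    Mᵀ.partialTransposeFst = M.partialTransposeFstᵀ :=
  rfl

@[simp]
theorem partialTransposeFst_neg [Neg α] (M : Matrix (m × n) (m × n) α) :
    (-M).partialTransposeFst = -M.partialTransposeFst :=
  rfl

@[simp]
theorem partialTransposeFst_sub [Sub α] (M N : Matrix (m × n) (m × n) α) :
    (M - N).partialTransposeFst = M.partialTransposeFst - N.partialTransposeFst :=
  rfl

theorem partialTransposeFst_kronecker [Mul α] (A : Matrix m m α) (B : Matrix n n α) :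
    (A ⊗ₖ B).partialTransposeFst = Aᵀ ⊗ₖ B :=
  rfl

theorem neg_kronecker [Mul α] [HasDistribNeg α] (A : Matrix m m α) (B : Matrix n n α) :
    (-A) ⊗ₖ B = -(A ⊗ₖ B) := by
  ext
  simp [neg_mul]

theorem kronecker_neg [Mul α] [HasDistribNeg α] (A : Matrix m m α) (B : Matrix n n α) :
    A ⊗ₖ (-B) = -(A ⊗ₖ B) := by
  ext
  simp [mul_neg]

theorem trace_partialTransposeFst_mul [Fintype m] [Fintype n] [CommSemiring α]
    (A B : Matrix (m × n) (m × n) α) :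
    (A.partialTransposeFst * B).trace = (A * B.partialTransposeFst).trace := by
  simp only [trace, diag, mul_apply, partialTransposeFst_apply, Fintype.sum_prod_type]
  rw [Finset.sum_comm]
  calc _ = ∑ b : n, ∑ c : m, ∑ a : m, ∑ d : n, A (c, b) (a, d) * B (c, d) (a, b) :=
        Finset.sum_congr rfl fun _ _ => Finset.sum_comm
    _ = _ := Finset.sum_comm

end Matrix

theorem ptA_eq_partialTransposeFst (M : Matrix (Fin 2 × Fin 2) (Fin 2 × Fin 2) ℝ) :
    ptA M = M.partialTransposeFst :=
  rfl

theorem y_transpose : yᵀ = -y := by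
  ext i j
  fin_cases i <;> fin_cases j <;> simp [y]

theorem y_mul_self : y * y = -1 := by
  ext i j
  fin_cases i <;> fin_cases j <;> simp [y]

theorem Y₄_mul_self : Y₄ * Y₄ = 1 := by
  rw [Y₄, neg_mul_neg, ← mul_kronecker_mul, y_mul_self, neg_kronecker, kronecker_neg, neg_neg,
    one_kronecker_one]

theorem partialTransposeFst_Y₄ : Y₄.partialTransposeFst = -Y₄ := by
  rw [Y₄, partialTransposeFst_neg, partialTransposeFst_kronecker, y_transpose, neg_kronecker]

theorem trace_smul_Y₄_mul_Y₄ (c : ℝ) : (c • Y₄ * Y₄).trace = c * 4 := by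
  simp [Y₄_mul_self]

theorem exists_eq_smul_Y₄_of_partialTransposeFst_eq_neg
    {D : Matrix (Fin 2 × Fin 2) (Fin 2 × Fin 2) ℝ} (hsymm : D.IsSymm)
    (hanti : D.partialTransposeFst = -D) : ∃ c : ℝ, D = c • Y₄ := by
  have hs (p q : Fin 2 × Fin 2) : D q p = D p q := congrFun (congrFun hsymm p) q
  have ha (p q : Fin 2 × Fin 2) : D (q.1, p.2) (p.1, q.2) = -D p q :=
    congrFun (congrFun hanti p) q
  have hfst (i j k) : D (i, j) (i, k) = 0 := by linarith [ha (i, j) (i, k)]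
  have hsnd (i j k) : D (i, j) (k, j) = 0 := by linarith [ha (i, j) (k, j), hs (i, j) (k, j)]
  -- The remaining block `D (0, j) (1, k)` is antisymmetric in `j, k`, hence a multiple of `y`.
  refine ⟨D (0, 1) (1, 0), ?_⟩
  ext ⟨i, j⟩ ⟨k, l⟩
  fin_cases i <;> fin_cases j <;> fin_cases k <;> fin_cases l <;> simp [Y₄, y, hfst, hsnd]
  all_goals linarith [ha (0, 1) (1, 0), hs (0, 0) (1, 1), hs (0, 1) (1, 0)]

theorem sub_partialTransposeFst_eq_smul_Y₄ {ρ : Matrix (Fin 2 × Fin 2) (Fin 2 × Fin 2) ℝ}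
    (hρ : ρ.IsSymm) : ρ - ρ.partialTransposeFst = ((1 / 2 : ℝ) * (ρ * Y₄).trace) • Y₄ := by
  set D := ρ - ρ.partialTransposeFst
  have hsymm : D.IsSymm := by
    rw [IsSymm, transpose_sub, ← partialTransposeFst_transpose, hρ.eq]
  have hanti : D.partialTransposeFst = -D := by
    rw [partialTransposeFst_sub, partialTransposeFst_partialTransposeFst, neg_sub]
  have htrace : (D * Y₄).trace = 2 * (ρ * Y₄).trace := by
    rw [sub_mul, trace_sub, trace_partialTransposeFst_mul, partialTransposeFst_Y₄, mul_neg,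
      trace_neg]
    ring
  obtain ⟨c, hc⟩ := exists_eq_smul_Y₄_of_partialTransposeFst_eq_neg hsymm hanti
  rw [hc, trace_smul_Y₄_mul_Y₄] at htrace
  rw [hc]
  congr 1
  linarith

/-- **Appendix C of the paper.**
Averaging a real symmetric 4×4 matrix with its partial transpose on the first
factor implements exactly the tomographically local projection Π_TL, removing
the σ_y ⊗ σ_y component. -/
theorem stmt18 (ρ : Matrix (Fin 2 × Fin 2) (Fin 2 × Fin 2) ℝ) (hρ : ρ.IsSymm) :
    (1 / 2 : ℝ) • (ρ + ptA ρ) = ρ - ((1 / 4 : ℝ) * (ρ * Y₄).trace) • Y₄ := by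
  calc (1 / 2 : ℝ) • (ρ + ptA ρ) = ρ - (1 / 2 : ℝ) • (ρ - ρ.partialTransposeFst) := by
        rw [ptA_eq_partialTransposeFst]
        module
    _ = ρ - ((1 / 4 : ℝ) * (ρ * Y₄).trace) • Y₄ := by
        rw [sub_partialTransposeFst_eq_smul_Y₄ hρ, smul_smul]
        ring_nf
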